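/- arXiv:2107.06830 — 5 statements merged into one kernel-verified Lean document; each statement's English description precedes it below -/
import Mathlib

section
/- Let H : ℝ^m × ℝ^m → ℝ be a function such that for each fixed q and p the map σ ↦ H(q, σ p) is differentiable on (0,∞), and suppose there is a constant C ≥ 0 such that the instantaneous temperature satisfies ⟨p, ∇_p H(q,p)⟩ ≤ C for all (q,p) (equivalently, σ · (d/dσ) H(q, σp) ≤ C for all σ > 0). Then for every (q,p) and every σ ≥ 1 one has H(q, σ p) ≤ H(q, p) + C · log σ; consequently, for every (q,p) with p ≠ 0, limsup_{σ→∞} H(q, σp)/σ ≤ 0, so H does not enjoy fibre-wise super-linear growth. -/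
open Filter

/-- A Hamiltonian on `ℝ^m × ℝ^m` whose instantaneous temperature
`⟨p, ∇ₚH(q,p)⟩ = σ·(d/dσ)H(q,σp)` is bounded above by `C` satisfies
`H(q,σp) ≤ H(q,p) + C log σ` for `σ ≥ 1`; hence
`limsup_{σ→∞} H(q,σp)/σ ≤ 0` and `H` does not enjoy fibre-wise
super-linear growth. -/
theorem bounded_temperature_not_superlinear (m : ℕ) (hm : 1 ≤ m)
    (H : (Fin m → ℝ) × (Fin m → ℝ) → ℝ) (C : ℝ) (hC : 0 ≤ C)
    (hdiff : ∀ (q p : Fin m → ℝ) (σ : ℝ), 0 < σ →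
      DifferentiableAt ℝ (fun t : ℝ => H (q, t • p)) σ)
    (htemp : ∀ (q p : Fin m → ℝ) (σ : ℝ), 0 < σ →
      σ * deriv (fun t : ℝ => H (q, t • p)) σ ≤ C) :
    (∀ (q p : Fin m → ℝ) (σ : ℝ), 1 ≤ σ →
       H (q, σ • p) ≤ H (q, p) + C * Real.log σ) ∧
    (∀ (q p : Fin m → ℝ), p ≠ 0 →
       Filter.limsup (fun σ : ℝ => H (q, σ • p) / σ) Filter.atTop ≤ 0) ∧
    ¬ (∀ (q p : Fin m → ℝ), p ≠ 0 →
        Filter.Tendsto (fun σ : ℝ => H (q, σ • p) / σ) Filter.atTop Filter.atTop) := by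
  -- Part 1: the logarithmic bound.
  have key : ∀ (q p : Fin m → ℝ) (σ : ℝ), 1 ≤ σ →
      H (q, σ • p) ≤ H (q, p) + C * Real.log σ := by
    intro q p σ hσ
    set f : ℝ → ℝ := fun t => H (q, t • p) with hf
    set g : ℝ → ℝ := fun t => H (q, p) + C * Real.log t - f t with hg
    have hderiv : ∀ t : ℝ, 0 < t → HasDerivAt g (C * t⁻¹ - deriv f t) t := by
      intro t ht
      exact (((Real.hasDerivAt_log (ne_of_gt ht)).const_mul C).const_add
        (H (q, p))).sub ((hdiff q p t ht).hasDerivAt)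
    have hmono : MonotoneOn g (Set.Ici (1 : ℝ)) := by
      apply monotoneOn_of_deriv_nonneg (convex_Ici 1)
      · intro t ht
        have ht1 : (0:ℝ) < t := lt_of_lt_of_le one_pos ht
        exact ((hderiv t ht1).differentiableAt).continuousAt.continuousWithinAt
      · intro t ht
        rw [interior_Ici] at ht
        exact ((hderiv t (lt_trans one_pos ht)).differentiableAt).differentiableWithinAt
      · intro t ht
        rw [interior_Ici] at ht
        have ht0 : (0:ℝ) < t := lt_trans one_pos ht
        rw [(hderiv t ht0).deriv]
        have h1 := htemp q p t ht0
        have h2 : deriv f t ≤ C * t⁻¹ := by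
          rw [le_mul_inv_iff₀ ht0, mul_comm]
          exact h1
        linarith
    have h10 : g 1 ≤ g σ := hmono (Set.mem_Ici.mpr le_rfl) (Set.mem_Ici.mpr hσ) hσ
    have hg1 : g 1 = 0 := by simp [hg, hf]
    have : (0:ℝ) ≤ H (q, p) + C * Real.log σ - f σ := by rw [← hg1]; exact h10
    simpa [hf] using this
  refine ⟨key, ?_, ?_⟩
  · -- Part 2: limsup ≤ 0.
    intro q p hp
    set u : ℝ → ℝ := fun σ => H (q, σ • p) / σ with hu
    -- the comparison function tends to 0
    have hg0 : Tendsto (fun σ : ℝ => (H (q, p) + C * Real.log σ) / σ) atTop (nhds 0) := by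
      have h1 : Tendsto (fun σ : ℝ => H (q, p) / σ) atTop (nhds 0) :=
        tendsto_const_nhds.div_atTop tendsto_id
      have h2 : Tendsto (fun σ : ℝ => Real.log σ / σ) atTop (nhds 0) :=
        Real.isLittleO_log_id_atTop.tendsto_div_nhds_zero
      have h3 := h1.add (h2.const_mul C)
      simp only [add_zero, mul_zero] at h3
      apply h3.congr'
      filter_upwards [eventually_gt_atTop (0:ℝ)] with x hx
      field_simp
    have hle : ∀ ε : ℝ, 0 < ε → ∀ᶠ σ : ℝ in atTop, u σ ≤ ε := by
      intro ε hε
      have hev : ∀ᶠ σ : ℝ in atTop, (H (q, p) + C * Real.log σ) / σ < ε :=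
        hg0.eventually (Filter.Tendsto.eventually_lt_const hε tendsto_id) |>.mono (by
          intro x hx; exact hx)
      filter_upwards [eventually_ge_atTop (1 : ℝ),
        hg0.eventually (gt_mem_nhds hε)] with σ hσ hσ'
      have hσ0 : (0:ℝ) < σ := lt_of_lt_of_le one_pos hσ
      have hk := key q p σ hσ
      calc u σ ≤ (H (q, p) + C * Real.log σ) / σ := by
            simp only [hu]; gcongr
        _ ≤ ε := le_of_lt hσ'
    rw [limsup_eq]
    by_cases hbdd : BddBelow {a : ℝ | ∀ᶠ σ : ℝ in atTop, u σ ≤ a}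
    · apply le_of_forall_pos_le_add
      intro ε hε
      have : sInf {a : ℝ | ∀ᶠ σ : ℝ in atTop, u σ ≤ a} ≤ ε :=
        csInf_le hbdd (hle ε hε)
      linarith
    · rw [Real.sInf_of_not_bddBelow hbdd]
  · -- Part 3: not superlinear.
    intro hcontra
    have hpne : (fun _ : Fin m => (1:ℝ)) ≠ 0 := by
      intro h
      have := congrFun h ⟨0, hm⟩
      simp at this
    set q : Fin m → ℝ := 0 with hq
    set p : Fin m → ℝ := fun _ => 1 with hp
    have h1 : ∀ᶠ σ : ℝ in atTop, (1:ℝ) ≤ H (q, σ • p) / σ :=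
      (hcontra q p hpne).eventually_ge_atTop 1
    have hg0 : Tendsto (fun σ : ℝ => (H (q, p) + C * Real.log σ) / σ) atTop (nhds 0) := by
      have ha : Tendsto (fun σ : ℝ => H (q, p) / σ) atTop (nhds 0) :=
        tendsto_const_nhds.div_atTop tendsto_id
      have hb : Tendsto (fun σ : ℝ => Real.log σ / σ) atTop (nhds 0) :=
        Real.isLittleO_log_id_atTop.tendsto_div_nhds_zero
      have h3 := ha.add (hb.const_mul C)
      simp only [add_zero, mul_zero] at h3
      apply h3.congr'
      filter_upwards [eventually_gt_atTop (0:ℝ)] with x hx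
      field_simp
    have h2 : ∀ᶠ σ : ℝ in atTop, (H (q, p) + C * Real.log σ) / σ < 1 :=
      hg0.eventually (gt_mem_nhds one_pos)
    obtain ⟨σ, hσ1, hσ2, hσ3⟩ := (h1.and (h2.and (eventually_ge_atTop (1:ℝ)))).exists
    have hσ0 : (0:ℝ) < σ := lt_of_lt_of_le one_pos hσ3
    have hk := key q p σ hσ3
    have h4 : H (q, σ • p) / σ ≤ (H (q, p) + C * Real.log σ) / σ := by gcongr
    linarith
end

section
/- Let μ ≠ 0, a > 0, T > 0 be real parameters and v : (0,∞) → ℝ be differentiable. Then the point (r₀, 0, s₀, 0), with r₀ > 0 and s₀ > 0, is a critical point of the reduced Nosé-thermostated Hamiltonian 𝐇_μ (i.e., all four partial derivatives of 𝐇_μ vanish there) if and only if T = r₀ · v'(r₀) and μ² = s₀² · r₀³ · v'(r₀). -/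
/-! At `p_r = S = 0` the `p_r`- and `S`-derivatives vanish identically. The `r`-equation
`v'(r₀) = μ²/(s₀² r₀³)` and the `s`-equation `T/s₀ = μ²/(r₀² s₀³)` express `μ²` in two ways,
and comparing them gives `T = r₀ v'(r₀)`. -/

/-- The reduced Nosé-thermostated Hamiltonian
`𝐇_μ(r, p_r, s, S) = (p_r² + μ²/r²)/(2s²) + v(r) + (a/2)·S² + T·log s`. -/
noncomputable def Hred (μ a T : ℝ) (v : ℝ → ℝ) (r pr s S : ℝ) : ℝ :=
  (pr ^ 2 + μ ^ 2 / r ^ 2) / (2 * s ^ 2) + v r + a / 2 * S ^ 2 + T * Real.log s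

section PartialDerivatives

variable (μ a T : ℝ) (v : ℝ → ℝ) (r pr s S : ℝ)

theorem hasDerivAt_Hred_r {v' : ℝ} (hv : HasDerivAt v v' r) (hr : r ≠ 0) :
    HasDerivAt (fun r => Hred μ a T v r pr s S) (v' - μ ^ 2 / (s ^ 2 * r ^ 3)) r := by
  have h := ((hasDerivAt_pow 2 r).inv (pow_ne_zero 2 hr)).const_mul (μ ^ 2)
    |>.const_add (pr ^ 2) |>.div_const (2 * s ^ 2) |>.add hv
    |>.add_const (a / 2 * S ^ 2 + T * Real.log s)
  refine (h.congr_deriv ?_).congr_of_eventuallyEq (.of_forall fun x => ?_)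
  · field_simp
    ring
  · simp only [Hred, Pi.add_apply, Pi.inv_apply, div_eq_mul_inv]
    ring

theorem hasDerivAt_Hred_pr :
    HasDerivAt (fun pr => Hred μ a T v r pr s S) (pr / s ^ 2) pr := by
  have h := (hasDerivAt_pow 2 pr).add_const (μ ^ 2 / r ^ 2) |>.div_const (2 * s ^ 2)
    |>.add_const (v r + a / 2 * S ^ 2 + T * Real.log s)
  refine (h.congr_deriv ?_).congr_of_eventuallyEq (.of_forall fun x => ?_)
  · field_simp
    ring
  · simp only [Hred]
    ring

theorem hasDerivAt_Hred_s (hs : s ≠ 0) :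
    HasDerivAt (fun s => Hred μ a T v r pr s S) (T / s - (pr ^ 2 + μ ^ 2 / r ^ 2) / s ^ 3) s := by
  have h := ((hasDerivAt_pow 2 s).const_mul 2).inv (by positivity)
    |>.const_mul (pr ^ 2 + μ ^ 2 / r ^ 2) |>.add_const (v r + a / 2 * S ^ 2)
    |>.add ((Real.hasDerivAt_log hs).const_mul T)
  refine (h.congr_deriv ?_).congr_of_eventuallyEq (.of_forall fun x => ?_)
  · field_simp
    ring
  · simp only [Hred, Pi.add_apply, Pi.inv_apply, div_eq_mul_inv]
    ring

theorem hasDerivAt_Hred_S :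
    HasDerivAt (fun S => Hred μ a T v r pr s S) (a * S) S := by
  have h := (hasDerivAt_pow 2 S).const_mul (a / 2)
    |>.const_add ((pr ^ 2 + μ ^ 2 / r ^ 2) / (2 * s ^ 2) + v r) |>.add_const (T * Real.log s)
  refine (h.congr_deriv ?_).congr_of_eventuallyEq (.of_forall fun x => ?_)
  · ring
  · rfl

end PartialDerivatives

theorem critical_equations_iff {r s T m d : ℝ} (hr : r ≠ 0) (hs : s ≠ 0) :
    (d - m / (s ^ 2 * r ^ 3) = 0 ∧ T / s - m / r ^ 2 / s ^ 3 = 0) ↔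
      (T = r * d ∧ m = s ^ 2 * r ^ 3 * d) := by
  have hm_r : d - m / (s ^ 2 * r ^ 3) = 0 ↔ m = s ^ 2 * r ^ 3 * d := by
    rw [sub_eq_zero, eq_div_iff (by positivity), mul_comm d, eq_comm]
  have hm_s : T / s - m / r ^ 2 / s ^ 3 = 0 ↔ m = s ^ 2 * r ^ 2 * T := by
    have hTs : T / s * (r ^ 2 * s ^ 3) = s ^ 2 * r ^ 2 * T := by field_simp
    rw [sub_eq_zero, div_div, eq_div_iff (by positivity), hTs, eq_comm]
  rw [hm_r, hm_s]
  constructor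
  · rintro ⟨hm, hT⟩
    refine ⟨mul_left_cancel₀ (by positivity : s ^ 2 * r ^ 2 ≠ 0) ?_, hm⟩
    linear_combination hT.symm.trans hm
  · rintro ⟨hT, hm⟩
    exact ⟨hm, by rw [hm, hT]; ring⟩

theorem critical_point_iff_general (μ a T : ℝ)
    (v : ℝ → ℝ) (hv : ∀ r > (0:ℝ), DifferentiableAt ℝ v r)
    (r₀ s₀ : ℝ) (hr₀ : 0 < r₀) (hs₀ : 0 < s₀) :
    (deriv (fun r => Hred μ a T v r 0 s₀ 0) r₀ = 0 ∧
     deriv (fun pr => Hred μ a T v r₀ pr s₀ 0) 0 = 0 ∧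
     deriv (fun s => Hred μ a T v r₀ 0 s 0) s₀ = 0 ∧
     deriv (fun S => Hred μ a T v r₀ 0 s₀ S) 0 = 0) ↔
    (T = r₀ * deriv v r₀ ∧ μ ^ 2 = s₀ ^ 2 * r₀ ^ 3 * deriv v r₀) := by
  rw [(hasDerivAt_Hred_r μ a T v r₀ 0 s₀ 0 (hv r₀ hr₀).hasDerivAt hr₀.ne').deriv,
    (hasDerivAt_Hred_pr μ a T v r₀ 0 s₀ 0).deriv, (hasDerivAt_Hred_s μ a T v r₀ 0 s₀ 0 hs₀.ne').deriv,
    (hasDerivAt_Hred_S μ a T v r₀ 0 s₀ 0).deriv]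
  simp only [ne_eq, OfNat.ofNat_ne_zero, not_false_eq_true, zero_pow, zero_add, zero_div, mul_zero,
    and_true, true_and]
  exact critical_equations_iff hr₀.ne' hs₀.ne'

/-- `(r₀, 0, s₀, 0)` is a critical point of the reduced Nosé-thermostated
Hamiltonian `𝐇_μ` (all four partial derivatives vanish) if and only if
`T = r₀ v'(r₀)` and `μ² = s₀² r₀³ v'(r₀)`. -/
theorem critical_point_iff (μ a T : ℝ) (hμ : μ ≠ 0) (ha : 0 < a) (hT : 0 < T)
    (v : ℝ → ℝ) (hv : ∀ r > (0:ℝ), DifferentiableAt ℝ v r)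
    (r₀ s₀ : ℝ) (hr₀ : 0 < r₀) (hs₀ : 0 < s₀) :
    (deriv (fun r => Hred μ a T v r 0 s₀ 0) r₀ = 0 ∧
     deriv (fun pr => Hred μ a T v r₀ pr s₀ 0) 0 = 0 ∧
     deriv (fun s => Hred μ a T v r₀ 0 s 0) s₀ = 0 ∧
     deriv (fun S => Hred μ a T v r₀ 0 s₀ S) 0 = 0) ↔
    (T = r₀ * deriv v r₀ ∧ μ ^ 2 = s₀ ^ 2 * r₀ ^ 3 * deriv v r₀) :=
  critical_point_iff_general μ a T v hv r₀ s₀ hr₀ hs₀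
end

section
/- Let J ⊆ (0,∞) be an open interval, v : J → ℝ twice differentiable with v'(r) > 0 and r·v''(r) + v'(r) > 0 for all r ∈ J. Let μ ≠ 0, a > 0, and let T be in the image of the map r ↦ r·v'(r) on J. Then there exist a unique r₀ ∈ J and a unique s₀ > 0 such that (r₀, 0, s₀, 0) is a critical point of the reduced Nosé-thermostated Hamiltonian 𝐇_μ; moreover s₀ = |μ| / √(r₀³ · v'(r₀)). -/
/-- `(r₀, 0, s₀, 0)` is a critical point of `𝐇_μ`: all four partial
derivatives vanish there. -/
noncomputable def IsCritPt (μ a T : ℝ) (v : ℝ → ℝ) (r₀ s₀ : ℝ) : Prop :=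
  deriv (fun r => Hred μ a T v r 0 s₀ 0) r₀ = 0 ∧
  deriv (fun pr => Hred μ a T v r₀ pr s₀ 0) 0 = 0 ∧
  deriv (fun s => Hred μ a T v r₀ 0 s 0) s₀ = 0 ∧
  deriv (fun S => Hred μ a T v r₀ 0 s₀ S) 0 = 0

lemma derivR (μ a T : ℝ) (v : ℝ → ℝ) (r₀ s₀ : ℝ) (hr : r₀ ≠ 0)
    (hd : DifferentiableAt ℝ v r₀) :
    deriv (fun r => Hred μ a T v r 0 s₀ 0) r₀
      = deriv v r₀ - μ ^ 2 * (2 * r₀) / (r₀ ^ 2) ^ 2 / (2 * s₀ ^ 2) := by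
  have hfun : (fun r => Hred μ a T v r 0 s₀ 0)
      = fun r => (μ ^ 2 * (r ^ 2)⁻¹ / (2 * s₀ ^ 2) + v r)
          + (a / 2 * 0 ^ 2 + T * Real.log s₀) := by
    funext r; unfold Hred; ring
  have h2 : HasDerivAt (fun r : ℝ => r ^ 2) (2 * r₀) r₀ := by
    simpa using hasDerivAt_pow 2 r₀
  have hinv : HasDerivAt (fun r : ℝ => (r ^ 2)⁻¹) (-(2 * r₀) / (r₀ ^ 2) ^ 2) r₀ :=
    h2.inv (pow_ne_zero 2 hr)
  have h3 : HasDerivAt (fun r : ℝ => μ ^ 2 * (r ^ 2)⁻¹)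
      (μ ^ 2 * (-(2 * r₀) / (r₀ ^ 2) ^ 2)) r₀ := hinv.const_mul (μ ^ 2)
  have h5 : HasDerivAt (fun r => Hred μ a T v r 0 s₀ 0)
      (μ ^ 2 * (-(2 * r₀) / (r₀ ^ 2) ^ 2) / (2 * s₀ ^ 2) + deriv v r₀) r₀ := by
    rw [hfun]
    exact ((h3.div_const _).add hd.hasDerivAt).add_const _
  rw [h5.deriv]; ring

lemma derivPr (μ a T : ℝ) (v : ℝ → ℝ) (r₀ s₀ : ℝ) :
    deriv (fun pr => Hred μ a T v r₀ pr s₀ 0) 0 = 0 := by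
  have hfun : (fun pr => Hred μ a T v r₀ pr s₀ 0)
      = fun pr => pr ^ 2 * (2 * s₀ ^ 2)⁻¹
          + (μ ^ 2 / r₀ ^ 2 * (2 * s₀ ^ 2)⁻¹ + v r₀ + a / 2 * 0 ^ 2 + T * Real.log s₀) := by
    funext pr; unfold Hred; ring
  have h5 : HasDerivAt (fun pr => Hred μ a T v r₀ pr s₀ 0)
      ((2 : ℕ) * (0 : ℝ) ^ (2 - 1) * (2 * s₀ ^ 2)⁻¹) 0 := by
    rw [hfun]
    exact ((hasDerivAt_pow 2 (0 : ℝ)).mul_const _).add_const _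
  rw [h5.deriv]; norm_num

lemma derivS (μ a T : ℝ) (v : ℝ → ℝ) (r₀ s₀ : ℝ) (hs : s₀ ≠ 0) :
    deriv (fun s => Hred μ a T v r₀ 0 s 0) s₀
      = (μ ^ 2 / r₀ ^ 2) * (-(2 * (2 * s₀)) / (2 * s₀ ^ 2) ^ 2) + T * s₀⁻¹ := by
  have hfun : (fun s => Hred μ a T v r₀ 0 s 0)
      = fun s => ((μ ^ 2 / r₀ ^ 2) * (2 * s ^ 2)⁻¹ + (v r₀ + a / 2 * 0 ^ 2))
          + T * Real.log s := by
    funext s; unfold Hred; ring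
  have h2 : HasDerivAt (fun s : ℝ => 2 * s ^ 2) (2 * (2 * s₀)) s₀ := by
    simpa using (hasDerivAt_pow 2 s₀).const_mul (2 : ℝ)
  have hne : (2 * s₀ ^ 2 : ℝ) ≠ 0 := by
    have : s₀ ^ 2 ≠ 0 := pow_ne_zero 2 hs
    positivity
  have hinv : HasDerivAt (fun s : ℝ => (2 * s ^ 2)⁻¹)
      (-(2 * (2 * s₀)) / (2 * s₀ ^ 2) ^ 2) s₀ := h2.inv hne
  have hlog : HasDerivAt (fun s : ℝ => T * Real.log s) (T * s₀⁻¹) s₀ :=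
    (Real.hasDerivAt_log hs).const_mul T
  have h5 : HasDerivAt (fun s => Hred μ a T v r₀ 0 s 0)
      ((μ ^ 2 / r₀ ^ 2) * (-(2 * (2 * s₀)) / (2 * s₀ ^ 2) ^ 2) + T * s₀⁻¹) s₀ := by
    rw [hfun]
    exact ((hinv.const_mul (μ ^ 2 / r₀ ^ 2)).add_const _).add hlog
  exact h5.deriv

lemma derivSbig (μ a T : ℝ) (v : ℝ → ℝ) (r₀ s₀ : ℝ) :
    deriv (fun S => Hred μ a T v r₀ 0 s₀ S) 0 = 0 := by
  have hfun : (fun S => Hred μ a T v r₀ 0 s₀ S)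
      = fun S => a / 2 * S ^ 2
          + ((0 ^ 2 + μ ^ 2 / r₀ ^ 2) / (2 * s₀ ^ 2) + v r₀ + T * Real.log s₀) := by
    funext S; unfold Hred; ring
  have h5 : HasDerivAt (fun S => Hred μ a T v r₀ 0 s₀ S)
      (a / 2 * ((2 : ℕ) * (0 : ℝ) ^ (2 - 1))) 0 := by
    rw [hfun]
    exact ((hasDerivAt_pow 2 (0 : ℝ)).const_mul (a / 2)).add_const _
  rw [h5.deriv]; norm_num

lemma crit_iff (μ a T : ℝ) (v : ℝ → ℝ) (r₀ s₀ : ℝ) (hr : 0 < r₀) (hs : 0 < s₀)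
    (hd : DifferentiableAt ℝ v r₀) :
    IsCritPt μ a T v r₀ s₀ ↔
      (deriv v r₀ = μ ^ 2 / (r₀ ^ 3 * s₀ ^ 2) ∧ T = μ ^ 2 / (r₀ ^ 2 * s₀ ^ 2)) := by
  unfold IsCritPt
  rw [derivR μ a T v r₀ s₀ hr.ne' hd, derivPr, derivS μ a T v r₀ s₀ hs.ne', derivSbig]
  constructor
  · rintro ⟨e1, -, e3, -⟩
    constructor
    · field_simp at e1 ⊢
      nlinarith [pow_pos hr 2, pow_pos hr 3, pow_pos hs 2, sq_nonneg μ]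
    · field_simp at e3 ⊢
      nlinarith [pow_pos hr 2, pow_pos hs 2, pow_pos hs 3]
  · rintro ⟨e1, e2⟩
    refine ⟨?_, rfl, ?_, rfl⟩
    · rw [e1]; field_simp; ring
    · rw [e2]; field_simp; ring


/-- Under hypotheses H1 and H2 on the potential `v` on an open interval
`J = (c, d) ⊆ (0, ∞)`, and for `T` in the image of `r ↦ r v'(r)`, there are a
unique `r₀ ∈ J` and a unique `s₀ > 0` such that `(r₀, 0, s₀, 0)` is a critical
point of the reduced thermostated Hamiltonian `𝐇_μ`; moreover
`s₀ = |μ| / √(r₀³ v'(r₀))`. -/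
theorem critical_point_exists_unique (c d : ℝ) (hc : 0 ≤ c)
    (v : ℝ → ℝ)
    (hv : ∀ r ∈ Set.Ioo c d, DifferentiableAt ℝ v r ∧ DifferentiableAt ℝ (deriv v) r)
    (h1 : ∀ r ∈ Set.Ioo c d, 0 < deriv v r)
    (h2 : ∀ r ∈ Set.Ioo c d, 0 < r * deriv (deriv v) r + deriv v r)
    (μ a T : ℝ) (hμ : μ ≠ 0) (ha : 0 < a)
    (hT : ∃ r ∈ Set.Ioo c d, T = r * deriv v r) :
    (∃! p : ℝ × ℝ, p.1 ∈ Set.Ioo c d ∧ 0 < p.2 ∧ IsCritPt μ a T v p.1 p.2) ∧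
    (∀ r₀ s₀ : ℝ, r₀ ∈ Set.Ioo c d → 0 < s₀ → IsCritPt μ a T v r₀ s₀ →
      s₀ = |μ| / Real.sqrt (r₀ ^ 3 * deriv v r₀)) := by
  obtain ⟨r₁, hr₁, hTr₁⟩ := hT
  have hrpos : ∀ r ∈ Set.Ioo c d, (0 : ℝ) < r := fun r hr => lt_of_le_of_lt hc hr.1
  -- strict monotonicity of f r = r * v' r
  have hmono : StrictMonoOn (fun r => r * deriv v r) (Set.Ioo c d) := by
    apply strictMonoOn_of_deriv_pos (convex_Ioo c d)
    · intro x hx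
      exact ((differentiableAt_id.mul (hv x hx).2).continuousAt).continuousWithinAt
    · intro x hx
      rw [interior_Ioo] at hx
      have hder : HasDerivAt (fun r => r * deriv v r)
          (1 * deriv v x + x * deriv (deriv v) x) x :=
        (hasDerivAt_id x).mul (hv x hx).2.hasDerivAt
      rw [hder.deriv]
      have := h2 x hx
      linarith
  -- the formula part
  have hform : ∀ r₀ s₀ : ℝ, r₀ ∈ Set.Ioo c d → 0 < s₀ → IsCritPt μ a T v r₀ s₀ →
      s₀ = |μ| / Real.sqrt (r₀ ^ 3 * deriv v r₀) := by
    intro r₀ s₀ hr₀ hs₀ hcrit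
    have hr0 : 0 < r₀ := hrpos _ hr₀
    obtain ⟨e1, e2⟩ := (crit_iff μ a T v r₀ s₀ hr0 hs₀ (hv _ hr₀).1).1 hcrit
    have key : r₀ ^ 3 * deriv v r₀ = μ ^ 2 / s₀ ^ 2 := by
      rw [e1]; field_simp
    rw [key, Real.sqrt_div (sq_nonneg μ), Real.sqrt_sq_eq_abs, Real.sqrt_sq hs₀.le]
    have hμ' : |μ| ≠ 0 := abs_ne_zero.2 hμ
    field_simp
  refine ⟨?_, hform⟩
  -- existence
  set s₁ : ℝ := |μ| / Real.sqrt (r₁ ^ 3 * deriv v r₁) with hs₁def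
  have hr1pos : 0 < r₁ := hrpos _ hr₁
  have hv1 : 0 < deriv v r₁ := h1 _ hr₁
  have hq : 0 < r₁ ^ 3 * deriv v r₁ := by positivity
  have hs₁pos : 0 < s₁ := by
    rw [hs₁def]
    exact div_pos (abs_pos.2 hμ) (Real.sqrt_pos.2 hq)
  have hs₁sq : s₁ ^ 2 = μ ^ 2 / (r₁ ^ 3 * deriv v r₁) := by
    rw [hs₁def, div_pow, sq_abs, Real.sq_sqrt hq.le]
  have hcrit1 : IsCritPt μ a T v r₁ s₁ := by
    rw [crit_iff μ a T v r₁ s₁ hr1pos hs₁pos (hv _ hr₁).1]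
    constructor
    · rw [hs₁sq]
      field_simp
    · rw [hTr₁, hs₁sq]
      field_simp
  refine ⟨(r₁, s₁), ⟨hr₁, hs₁pos, hcrit1⟩, ?_⟩
  rintro ⟨r₂, s₂⟩ ⟨hr₂, hs₂, hcrit2⟩
  have hr2pos : 0 < r₂ := hrpos _ hr₂
  obtain ⟨e1, e2⟩ := (crit_iff μ a T v r₂ s₂ hr2pos hs₂ (hv _ hr₂).1).1 hcrit2
  have hTr₂ : T = r₂ * deriv v r₂ := by
    rw [e2, e1]; field_simp
  have hreq : r₂ = r₁ := by
    apply hmono.injOn hr₂ hr₁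
    simp only
    rw [← hTr₂, ← hTr₁]
  have hseq : s₂ = s₁ := by
    rw [hform r₂ s₂ hr₂ hs₂ hcrit2, hreq, hs₁def]
  simp [hreq, hseq]
end

section
/- Let v : (0,∞) → ℝ be the Lennard-Jones potential v(r) = r^{−12} − r^{−6}. Then for all r in the interval (2^{1/6}, 4^{1/6}): v'(r) > 0 and r·v''(r) + v'(r) > 0; moreover the function r ↦ r·v'(r) = 6r^{−6} − 12r^{−12} is a strictly increasing bijection from (2^{1/6}, 4^{1/6}) onto (0, 3/4). In particular, for every temperature T ∈ (0, 3/4) there is a unique r₀ ∈ (2^{1/6}, 4^{1/6}) with r₀·v'(r₀) = T. -/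
/-! With `w = r⁻⁶` the Lennard-Jones potential `v(r) = r⁻¹² − r⁻⁶` gives

  `r v'(r) = 6w − 12w²`,  `v'(r) = 6w(1 − 2w)/r`,  `r v''(r) + v'(r) = (r v')'(r) = 36w(4w − 1)/r`,

and `r ∈ (2^(1/6), 4^(1/6))` exactly when `w ∈ (1/4, 1/2)`. There both derivatives are positive,
and `r ↦ r v'(r)` is the decreasing map `r ↦ r⁻⁶` followed by the parabola `6w − 12w²`, which
decreases on `[1/4, ∞)` from its maximum `3/4`; so it increases strictly from `0` to `3/4`, and is
onto `(0, 3/4)` by the intermediate value theorem. -/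

open Set

theorem Set.BijOn.existsUnique_mem {α β : Type*} {f : α → β} {s : Set α} {t : Set β}
    (hf : BijOn f s t) {b : β} (hb : b ∈ t) : ∃! a, a ∈ s ∧ f a = b := by
  obtain ⟨a, ha, rfl⟩ := hf.surjOn hb
  exact ⟨a, ⟨ha, rfl⟩, fun a' h' => hf.injOn h'.1 ha h'.2⟩

namespace LennardJones

noncomputable def potential (r : ℝ) : ℝ := r ^ (-12 : ℤ) - r ^ (-6 : ℤ)

local notation "I" => Ioo ((2 : ℝ) ^ (6 : ℝ)⁻¹) ((4 : ℝ) ^ (6 : ℝ)⁻¹)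

theorem hasDerivAt_potential {r : ℝ} (hr : r ≠ 0) :
    HasDerivAt potential (-12 * r ^ (-13 : ℤ) + 6 * r ^ (-7 : ℤ)) r :=
  ((hasDerivAt_zpow (-12) r (.inl hr)).sub (hasDerivAt_zpow (-6) r (.inl hr))).congr_deriv
    (by norm_num)

theorem deriv_potential {r : ℝ} (hr : r ≠ 0) :
    deriv potential r = -12 * r ^ (-13 : ℤ) + 6 * r ^ (-7 : ℤ) :=
  (hasDerivAt_potential hr).deriv

theorem deriv_deriv_potential {r : ℝ} (hr : r ≠ 0) :
    deriv (deriv potential) r = 156 * r ^ (-14 : ℤ) - 42 * r ^ (-8 : ℤ) := by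
  have hderiv : deriv potential =ᶠ[nhds r] fun x => -12 * x ^ (-13 : ℤ) + 6 * x ^ (-7 : ℤ) := by
    filter_upwards [isOpen_ne.mem_nhds hr] with x hx using deriv_potential hx
  refine (HasDerivAt.congr_of_eventuallyEq ?_ hderiv).deriv
  exact (((hasDerivAt_zpow (-13) r (.inl hr)).const_mul (-12)).add
    ((hasDerivAt_zpow (-7) r (.inl hr)).const_mul 6)).congr_deriv (by norm_num; ring)

theorem deriv_potential_eq {r : ℝ} (hr : r ≠ 0) :
    deriv potential r = 6 * r ^ (-6 : ℤ) * (1 - 2 * r ^ (-6 : ℤ)) / r := by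
  rw [deriv_potential hr]
  simp only [zpow_neg]
  field_simp
  ring

theorem mul_deriv_deriv_add_deriv_potential {r : ℝ} (hr : r ≠ 0) :
    r * deriv (deriv potential) r + deriv potential r
      = 36 * r ^ (-6 : ℤ) * (4 * r ^ (-6 : ℤ) - 1) / r := by
  rw [deriv_deriv_potential hr, deriv_potential hr]
  simp only [zpow_neg]
  field_simp
  ring

theorem mul_deriv_potential {r : ℝ} (hr : r ≠ 0) :
    r * deriv potential r = 6 * r ^ (-6 : ℤ) - 12 * r ^ (-12 : ℤ) := by
  rw [deriv_potential hr]
  simp only [zpow_neg]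
  field_simp
  ring

theorem mul_deriv_potential_eq_sq {r : ℝ} (hr : r ≠ 0) :
    r * deriv potential r = 6 * r ^ (-6 : ℤ) - 12 * (r ^ (-6 : ℤ)) ^ 2 := by
  rw [mul_deriv_potential hr, ← zpow_natCast, ← zpow_mul]
  norm_num

theorem strictAntiOn_six_mul_sub_twelve_mul_sq :
    StrictAntiOn (fun w : ℝ => 6 * w - 12 * w ^ 2) (Ici (1 / 4)) := by
  intro w hw w' hw' hww'
  simp only [mem_Ici] at hw hw'
  nlinarith

theorem zpow_neg_six_lt_zpow_neg_six {r s : ℝ} (hr : 0 < r) (hrs : r < s) :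
    s ^ (-6 : ℤ) < r ^ (-6 : ℤ) := by
  simp only [zpow_neg, zpow_ofNat]
  exact inv_strictAnti₀ (by positivity) (pow_lt_pow_left₀ hrs hr.le (by norm_num))

theorem rpow_inv_six_zpow_neg_six {x : ℝ} (hx : 0 ≤ x) : (x ^ (6 : ℝ)⁻¹) ^ (-6 : ℤ) = x⁻¹ := by
  rw [zpow_neg, zpow_ofNat, ← Nat.cast_ofNat (R := ℝ) (n := 6), Real.rpow_inv_natCast_pow hx
    (by norm_num)]

theorem pos_of_mem_Ioo {r : ℝ} (hr : r ∈ I) : 0 < r :=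
  lt_trans (by positivity) hr.1

theorem zpow_neg_six_mem_Ioo {r : ℝ} (hr : r ∈ I) : r ^ (-6 : ℤ) ∈ Ioo (1 / 4) (1 / 2) := by
  have hr₀ := pos_of_mem_Ioo hr
  have h₂ : 2 < r ^ 6 := by
    rw [← Real.rpow_natCast]
    exact_mod_cast (Real.rpow_inv_lt_iff_of_pos (by norm_num) hr₀.le (by norm_num)).1 hr.1
  have h₄ : r ^ 6 < 4 := by
    rw [← Real.rpow_natCast]
    exact_mod_cast (Real.lt_rpow_inv_iff_of_pos hr₀.le (by norm_num) (by norm_num)).1 hr.2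
  rw [zpow_neg, zpow_ofNat, one_div, one_div]
  exact ⟨inv_strictAnti₀ (by positivity) h₄, inv_strictAnti₀ (by norm_num) h₂⟩

theorem deriv_potential_pos {r : ℝ} (hr : r ∈ I) : 0 < deriv potential r := by
  have hw := zpow_neg_six_mem_Ioo hr
  rw [deriv_potential_eq (pos_of_mem_Ioo hr).ne']
  exact div_pos (mul_pos (by linarith [hw.1]) (by linarith [hw.2])) (pos_of_mem_Ioo hr)

theorem mul_deriv_deriv_add_deriv_potential_pos {r : ℝ} (hr : r ∈ I) :
    0 < r * deriv (deriv potential) r + deriv potential r := by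
  have hw := zpow_neg_six_mem_Ioo hr
  rw [mul_deriv_deriv_add_deriv_potential (pos_of_mem_Ioo hr).ne']
  exact div_pos (mul_pos (by linarith [hw.1]) (by linarith [hw.1])) (pos_of_mem_Ioo hr)

theorem strictMonoOn_mul_deriv_potential : StrictMonoOn (fun r => r * deriv potential r) I := by
  intro r hr s hs hrs
  have hw := zpow_neg_six_mem_Ioo hr
  have hw' := zpow_neg_six_mem_Ioo hs
  simp only [mul_deriv_potential_eq_sq (pos_of_mem_Ioo hr).ne', mul_deriv_potential_eq_sq
    (pos_of_mem_Ioo hs).ne']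
  exact strictAntiOn_six_mul_sub_twelve_mul_sq (mem_Ici.2 hw'.1.le) (mem_Ici.2 hw.1.le)
    (zpow_neg_six_lt_zpow_neg_six (pos_of_mem_Ioo hr) hrs)

theorem mapsTo_mul_deriv_potential : MapsTo (fun r => r * deriv potential r) I (Ioo 0 (3 / 4)) := by
  intro r hr
  obtain ⟨hw₁, hw₂⟩ := zpow_neg_six_mem_Ioo hr
  simp only [mul_deriv_potential_eq_sq (pos_of_mem_Ioo hr).ne', mem_Ioo]
  -- `3/4 − (6w − 12w²) = 12 (w − 1/4)²`
  constructor <;> nlinarith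

theorem surjOn_mul_deriv_potential : SurjOn (fun r => r * deriv potential r) I (Ioo 0 (3 / 4)) := by
  have ha : (0 : ℝ) < 2 ^ (6 : ℝ)⁻¹ := by positivity
  have hab : (2 : ℝ) ^ (6 : ℝ)⁻¹ ≤ 4 ^ (6 : ℝ)⁻¹ :=
    Real.rpow_le_rpow (by norm_num) (by norm_num) (by norm_num)
  have hcont : ContinuousOn (fun r => r * deriv potential r)
      (Icc ((2 : ℝ) ^ (6 : ℝ)⁻¹) (4 ^ (6 : ℝ)⁻¹)) := by
    refine ContinuousOn.congr (f := fun r : ℝ => 6 * r ^ (-6 : ℤ) - 12 * r ^ (-12 : ℤ)) ?_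
      fun r hr => mul_deriv_potential (ha.trans_le hr.1).ne'
    fun_prop (disch := intro r hr; exact .inl (ha.trans_le hr.1).ne')
  have hivt := intermediate_value_Ioo hab hcont
  simp only [mul_deriv_potential_eq_sq ha.ne', mul_deriv_potential_eq_sq (ha.trans_le hab).ne',
    rpow_inv_six_zpow_neg_six (zero_le_two : (0 : ℝ) ≤ 2),
    rpow_inv_six_zpow_neg_six (zero_le_four : (0 : ℝ) ≤ 4)] at hivt
  rwa [show (6 : ℝ) * 2⁻¹ - 12 * 2⁻¹ ^ 2 = 0 by norm_num,
    show (6 : ℝ) * 4⁻¹ - 12 * 4⁻¹ ^ 2 = 3 / 4 by norm_num] at hivt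

end LennardJones

open LennardJones

/-- Verification of hypotheses H1–H3 of Theorem 1.2 for the Lennard-Jones
potential `v(r) = r⁻¹² − r⁻⁶` on the interval `J = (2^(1/6), 4^(1/6))`:
`v' > 0` and `r v'' + v' > 0` on `J`, `r v'(r) = 6r⁻⁶ − 12r⁻¹²`, and
`r ↦ r v'(r)` is a strictly increasing bijection of `J` onto `(0, 3/4)`;
hence every `T ∈ (0, 3/4)` is attained at a unique `r₀ ∈ J`. -/
theorem lennard_jones_hypotheses (v : ℝ → ℝ)
    (hv : v = fun r => r ^ (-12 : ℤ) - r ^ (-6 : ℤ)) :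
    (∀ r ∈ Set.Ioo ((2:ℝ) ^ ((6:ℝ)⁻¹)) ((4:ℝ) ^ ((6:ℝ)⁻¹)),
      0 < deriv v r ∧ 0 < r * deriv (deriv v) r + deriv v r ∧
      r * deriv v r = 6 * r ^ (-6 : ℤ) - 12 * r ^ (-12 : ℤ)) ∧
    StrictMonoOn (fun r => r * deriv v r)
      (Set.Ioo ((2:ℝ) ^ ((6:ℝ)⁻¹)) ((4:ℝ) ^ ((6:ℝ)⁻¹))) ∧
    Set.BijOn (fun r => r * deriv v r)
      (Set.Ioo ((2:ℝ) ^ ((6:ℝ)⁻¹)) ((4:ℝ) ^ ((6:ℝ)⁻¹)))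
      (Set.Ioo 0 (3/4)) ∧
    ∀ T ∈ Set.Ioo (0:ℝ) (3/4),
      ∃! r₀, r₀ ∈ Set.Ioo ((2:ℝ) ^ ((6:ℝ)⁻¹)) ((4:ℝ) ^ ((6:ℝ)⁻¹)) ∧
        r₀ * deriv v r₀ = T := by
  obtain rfl : v = potential := hv
  have hbij : BijOn (fun r => r * deriv potential r) _ _ :=
    ⟨mapsTo_mul_deriv_potential, strictMonoOn_mul_deriv_potential.injOn,
      surjOn_mul_deriv_potential⟩
  exact ⟨fun r hr => ⟨deriv_potential_pos hr, mul_deriv_deriv_add_deriv_potential_pos hr,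
      mul_deriv_potential (pos_of_mem_Ioo hr).ne'⟩,
    strictMonoOn_mul_deriv_potential, hbij, fun T hT => hbij.existsUnique_mem hT⟩
end

section
/- Let n ≥ 2 be an integer, λ > 0 with λ ≠ 1, w ∈ ℝⁿ, and K ∈ ℝ. Suppose that for all I ∈ (0,∞)ⁿ the identity Σ_{i=1}^n w_i · I_i^{λ−1} = K · (Σ_{i=1}^n I_i^λ)^{(λ−1)/λ} holds. Then w = 0 and K = 0. -/
open Real Finset

/-- Strict convexity of `exp`: `x^p < p*x + (1-p)` for `0<x`, `x≠1`, `0<p<1`. -/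
lemma freqmap_exp_aux (x p : ℝ) (hx : 0 < x) (hx1 : x ≠ 1) (hp : 0 < p) (hp1 : p < 1) :
    x ^ p < p * x + (1 - p) := by
  have hlog : Real.log x ≠ 0 := by
    intro hc
    rcases Real.log_eq_zero.1 hc with h0 | h0 | h0 <;> [linarith; exact hx1 h0; linarith]
  have hcv : Real.exp (p • Real.log x + (1 - p) • (0:ℝ))
      < p • Real.exp (Real.log x) + (1 - p) • Real.exp 0 :=
    strictConvexOn_exp.2 (Set.mem_univ (Real.log x)) (Set.mem_univ (0:ℝ))
      hlog hp (by linarith) (by ring)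
  have h2 : Real.exp (p * Real.log x + (1 - p) * 0) < p * x + (1 - p) := by
    simp only [smul_eq_mul, Real.exp_log hx, Real.exp_zero, mul_one] at hcv
    exact hcv
  rw [Real.rpow_def_of_pos hx]
  have : Real.log x * p = p * Real.log x + (1 - p) * 0 := by ring
  rw [this]; exact h2

lemma freqmap_key (p : ℝ) (hp0 : p ≠ 0) (hp1 : p < 1) :
    (3:ℝ) ^ p + 1 ≠ 2 * (2:ℝ) ^ p := by
  rcases lt_or_gt_of_ne hp0 with hneg | hpos
  · -- p < 0 : 3^p + 1 > 2*2^p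
    intro heq
    have h1 : (3:ℝ) ^ (p/2) * (3:ℝ) ^ (p/2) = (3:ℝ) ^ p := by
      rw [← Real.rpow_add (by norm_num : (0:ℝ) < 3)]; ring_nf
    have h2 : (2:ℝ) ^ p < (3:ℝ) ^ (p/2) := by
      rw [Real.rpow_def_of_pos (by norm_num : (0:ℝ) < 2),
          Real.rpow_def_of_pos (by norm_num : (0:ℝ) < 3)]
      apply Real.exp_lt_exp.2
      have l2 : 0 < Real.log 2 := Real.log_pos (by norm_num)
      have l34 : Real.log 3 < Real.log 4 := Real.log_lt_log (by norm_num) (by norm_num)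
      have l4 : Real.log 4 = 2 * Real.log 2 := by
        rw [show (4:ℝ) = 2 ^ (2:ℕ) by norm_num, Real.log_pow]; push_cast; ring
      nlinarith [mul_pos_of_neg_of_neg hneg (show Real.log 3 - 2 * Real.log 2 < 0 by linarith)]
    have h3 : (0:ℝ) < (3:ℝ) ^ (p/2) := Real.rpow_pos_of_pos (by norm_num) _
    nlinarith [sq_nonneg ((3:ℝ) ^ (p/2) - 1)]
  · -- 0 < p < 1 : 3^p + 1 < 2*2^p
    intro heq
    have e3 : (3:ℝ) ^ p = (3/2:ℝ) ^ p * (2:ℝ) ^ p := by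
      rw [← Real.mul_rpow (by norm_num) (by norm_num)]; norm_num
    have e1 : (1:ℝ) = (1/2:ℝ) ^ p * (2:ℝ) ^ p := by
      rw [← Real.mul_rpow (by norm_num) (by norm_num)]; norm_num
    have b3 : (3/2:ℝ) ^ p < p * (3/2) + (1 - p) :=
      freqmap_exp_aux _ _ (by norm_num) (by norm_num) hpos hp1
    have b1 : (1/2:ℝ) ^ p < p * (1/2) + (1 - p) :=
      freqmap_exp_aux _ _ (by norm_num) (by norm_num) hpos hp1
    have h2p : (0:ℝ) < (2:ℝ) ^ p := Real.rpow_pos_of_pos (by norm_num) _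
    have hsum : (3/2:ℝ) ^ p + (1/2:ℝ) ^ p = 2 := by
      have : ((3/2:ℝ) ^ p + (1/2:ℝ) ^ p) * (2:ℝ) ^ p = 2 * (2:ℝ) ^ p := by
        rw [add_mul, ← e3, ← e1]; linarith
      exact mul_right_cancel₀ (ne_of_gt h2p) this
    linarith

/-- The functional identity at the core of Remark 4.13: for `n ≥ 2` and
`λ ≠ 1`, if `∑ wᵢ Iᵢ^(λ−1) = K (∑ Iᵢ^λ)^((λ−1)/λ)` for all `I` in the positive
orthant, then `w = 0` and `K = 0`; hence the re-scaled frequency map of the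
thermostated homogeneous Hamiltonian is R-non-degenerate. -/
theorem frequency_map_R_nondegenerate (n : ℕ) (hn : 2 ≤ n)
    (lam : ℝ) (hlam : 0 < lam) (hlam1 : lam ≠ 1)
    (w : Fin n → ℝ) (K : ℝ)
    (h : ∀ I : Fin n → ℝ, (∀ i, 0 < I i) →
      ∑ i, w i * I i ^ (lam - 1) =
        K * (∑ i, I i ^ lam) ^ ((lam - 1) / lam)) :
    w = 0 ∧ K = 0 := by
  have hlam0 : lam ≠ 0 := ne_of_gt hlam
  set p : ℝ := (lam - 1) / lam with hpdef
  -- general plug-in identity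
  have hne : ∀ i j : Fin n, i ≠ j → ∀ a b : ℝ, 0 < a → 0 < b →
      (∑ k, w k) + w i * (a ^ (lam - 1) - 1) + w j * (b ^ (lam - 1) - 1)
        = K * ((n : ℝ) + (a ^ lam - 1) + (b ^ lam - 1)) ^ p := by
    intro i j hij a b ha hb
    have hI : ∀ k : Fin n, (0:ℝ) < (if k = i then a else if k = j then b else 1) := by
      intro k; split_ifs <;> [exact ha; exact hb; norm_num]
    have hh := h (fun k => if k = i then a else if k = j then b else 1) hI
    have lhs_eq : ∑ k, w k * (if k = i then a else if k = j then b else 1) ^ (lam - 1)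
        = (∑ k, w k) + w i * (a ^ (lam - 1) - 1) + w j * (b ^ (lam - 1) - 1) := by
      have step : ∀ k : Fin n, w k * (if k = i then a else if k = j then b else 1) ^ (lam - 1)
          = w k + ((if k = i then w i * (a ^ (lam - 1) - 1) else 0)
              + (if k = j then w j * (b ^ (lam - 1) - 1) else 0)) := by
        intro k
        by_cases h1 : k = i
        · subst h1; simp [hij]; ring
        · by_cases h2 : k = j
          · subst h2; simp [h1]; ring
          · simp [h1, h2]
      simp_rw [step, Finset.sum_add_distrib, Finset.sum_ite_eq', Finset.mem_univ, if_true]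
      ring
    have rhs_eq : ∑ k, (if k = i then a else if k = j then b else 1) ^ lam
        = (n : ℝ) + (a ^ lam - 1) + (b ^ lam - 1) := by
      have step : ∀ k : Fin n, (if k = i then a else if k = j then b else 1) ^ lam
          = 1 + ((if k = i then a ^ lam - 1 else 0) + (if k = j then b ^ lam - 1 else 0)) := by
        intro k
        by_cases h1 : k = i
        · subst h1; simp [hij]
        · by_cases h2 : k = j
          · subst h2; simp [h1]
          · simp [h1, h2]
      simp_rw [step, Finset.sum_add_distrib, Finset.sum_ite_eq', Finset.mem_univ, if_true,
        Finset.sum_const, Finset.card_univ, Fintype.card_fin, nsmul_eq_mul, mul_one]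
      ring
    rw [lhs_eq, rhs_eq] at hh
    exact hh
  -- 2^(lam-1) ≠ 1
  have h21 : (2:ℝ) ^ (lam - 1) ≠ 1 := by
    intro hc
    have hl := congrArg Real.log hc
    rw [Real.log_rpow (by norm_num : (0:ℝ) < 2), Real.log_one] at hl
    have l2 : Real.log 2 ≠ 0 := ne_of_gt (Real.log_pos (by norm_num))
    have : lam - 1 = 0 := (mul_eq_zero.1 hl).resolve_right l2
    exact hlam1 (by linarith)
  -- all w's are equal
  have hww : ∀ i j : Fin n, w i = w j := by
    intro i j
    by_cases hij : i = j
    · rw [hij]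
    · have e1 := hne i j hij 2 1 (by norm_num) (by norm_num)
      have e2 := hne i j hij 1 2 (by norm_num) (by norm_num)
      simp only [Real.one_rpow] at e1 e2
      have hr : ((n:ℝ) + ((2:ℝ) ^ lam - 1) + (1 - 1)) = ((n:ℝ) + (1 - 1) + ((2:ℝ) ^ lam - 1)) := by
        ring
      rw [hr] at e1
      have hmul : w i * ((2:ℝ) ^ (lam - 1) - 1) = w j * ((2:ℝ) ^ (lam - 1) - 1) := by
        linarith
      exact mul_right_cancel₀ (sub_ne_zero.2 h21) hmul
  -- indices
  have hn0 : 0 < n := by omega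
  have hn1 : 1 < n := by omega
  set i0 : Fin n := ⟨0, hn0⟩ with hi0
  set i1 : Fin n := ⟨1, hn1⟩ with hi1
  have hi01 : i0 ≠ i1 := by
    simp [hi0, hi1, Fin.ext_iff]
  set c : ℝ := w i0 with hc
  have hwc : ∀ k : Fin n, w k = c := fun k => hww k i0
  have hS : (∑ k, w k) = (n:ℝ) * c := by
    rw [Finset.sum_congr rfl fun k _ => hwc k]
    simp [Finset.card_univ, mul_comm]
  -- p facts
  have hp0 : p ≠ 0 := div_ne_zero (sub_ne_zero.2 hlam1) hlam0
  have hplt1 : p < 1 := by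
    rw [hpdef, div_lt_one hlam]; linarith
  -- rpow computations
  have pow3a : ((3:ℝ) ^ lam⁻¹) ^ (lam - 1) = (3:ℝ) ^ p := by
    rw [← Real.rpow_mul (by norm_num : (0:ℝ) ≤ 3), hpdef, div_eq_inv_mul]
  have pow3b : ((3:ℝ) ^ lam⁻¹) ^ lam = 3 := by
    rw [← Real.rpow_mul (by norm_num : (0:ℝ) ≤ 3), inv_mul_cancel₀ hlam0, Real.rpow_one]
  have pow2a : ((2:ℝ) ^ lam⁻¹) ^ (lam - 1) = (2:ℝ) ^ p := by
    rw [← Real.rpow_mul (by norm_num : (0:ℝ) ≤ 2), hpdef, div_eq_inv_mul]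
  have pow2b : ((2:ℝ) ^ lam⁻¹) ^ lam = 2 := by
    rw [← Real.rpow_mul (by norm_num : (0:ℝ) ≤ 2), inv_mul_cancel₀ hlam0, Real.rpow_one]
  have h3pos : (0:ℝ) < (3:ℝ) ^ lam⁻¹ := Real.rpow_pos_of_pos (by norm_num) _
  have h2pos : (0:ℝ) < (2:ℝ) ^ lam⁻¹ := Real.rpow_pos_of_pos (by norm_num) _
  -- Equation with a = 3^(1/lam), b = 1
  have E2 := hne i0 i1 hi01 ((3:ℝ) ^ lam⁻¹) 1 h3pos (by norm_num)
  simp only [Real.one_rpow, pow3a, pow3b, hwc, Finset.sum_const, Finset.card_univ, Fintype.card_fin, nsmul_eq_mul] at E2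
  -- Equation with a = b = 2^(1/lam)
  have E3 := hne i0 i1 hi01 ((2:ℝ) ^ lam⁻¹) ((2:ℝ) ^ lam⁻¹) h2pos h2pos
  simp only [pow2a, pow2b, hwc, Finset.sum_const, Finset.card_univ, Fintype.card_fin, nsmul_eq_mul] at E3
  have hargs : ((n:ℝ) + ((3:ℝ) - 1) + (1 - 1)) = ((n:ℝ) + ((2:ℝ) - 1) + ((2:ℝ) - 1)) := by ring
  rw [hargs] at E2
  have hc0 : c = 0 := by
    have hfac : (3:ℝ) ^ p + 1 - 2 * (2:ℝ) ^ p ≠ 0 := sub_ne_zero.2 (freqmap_key p hp0 hplt1)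
    have : c * ((3:ℝ) ^ p + 1 - 2 * (2:ℝ) ^ p) = 0 := by linarith
    exact (mul_eq_zero.1 this).resolve_right hfac
  -- Equation with a = b = 1 gives K = 0
  have E1 := hne i0 i1 hi01 1 1 (by norm_num) (by norm_num)
  simp only [Real.one_rpow, hwc, Finset.sum_const, Finset.card_univ, Fintype.card_fin, nsmul_eq_mul] at E1
  have hK0 : K = 0 := by
    have hnp : (0:ℝ) < ((n:ℝ) + (1 - 1) + (1 - 1)) ^ p := by
      apply Real.rpow_pos_of_pos
      have : (0:ℝ) < (n:ℝ) := by exact_mod_cast hn0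
      linarith
    have hE1' : K * ((n:ℝ) + (1 - 1) + (1 - 1)) ^ p = 0 := by
      rw [← E1, hc0]; ring
    exact (mul_eq_zero.1 hE1').resolve_right (ne_of_gt hnp)
  refine ⟨funext fun k => ?_, hK0⟩
  rw [hwc k, hc0]; rfl
end
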